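/- Suppose B_r(d) is invariant for ẋ = Ax + N(x)x and x₀ ∈ B_r(d), where N is linear and energy preserving. Consider the observer ẋ̂ = Ax̂ + N(x̂)x̂ − L(Cx − Cx̂). If there exist d̂ ∈ ℝⁿ and α > 0 such that vᵀ(A_{d̂} + LC)v ≤ −α‖v‖₂² for all v, then B_{r̂}(d̂) is invariant for the observer dynamics for any r̂ ≥ (1/α)·sup_{v ∈ B_r(d−d̂)} ‖LCv − Ad̂ − N(d̂)d̂‖₂. -/

import Mathlib

/-!
For the error `e = x̂ - d̂`, the observer field splits as `(A_{d̂} + LC) e + N(e) e - g` with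
`g = LC(x - d̂) - A d̂ - N(d̂) d̂`. Energy preservation kills `eᵀN(e)e`, and while the state stays
in `B_r(d)` we have `‖g‖ ≤ α r̂`, so `½ d/dt ‖e‖² ≤ -α‖e‖² + α r̂ ‖e‖ ≤ ½ α (r̂² - ‖e‖²)`.
Grönwall's inequality for `y' ≤ α (r̂² - y)`, whose solution through `r̂²` is constant, keeps
`‖e‖² ≤ r̂²`.
-/

open Matrix

noncomputable def enorm₂ {n : ℕ} (v : Fin n → ℝ) : ℝ := Real.sqrt (∑ i, v i ^ 2)

section Enorm

variable {n : ℕ}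

theorem enorm₂_nonneg (v : Fin n → ℝ) : 0 ≤ enorm₂ v := Real.sqrt_nonneg _

theorem enorm₂_sq (v : Fin n → ℝ) : enorm₂ v ^ 2 = v ⬝ᵥ v := by
  rw [enorm₂, Real.sq_sqrt (Finset.sum_nonneg fun _ _ => sq_nonneg _)]
  simp only [dotProduct, sq]

theorem enorm₂_neg (v : Fin n → ℝ) : enorm₂ (-v) = enorm₂ v := by
  simp [enorm₂]

theorem dotProduct_le_enorm₂_mul_enorm₂ (v w : Fin n → ℝ) : v ⬝ᵥ w ≤ enorm₂ v * enorm₂ w :=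
  Real.sum_mul_le_sqrt_mul_sqrt _ v w

theorem enorm₂_le_of_dotProduct_self_le {v : Fin n → ℝ} {r : ℝ} (hr : 0 ≤ r)
    (hv : v ⬝ᵥ v ≤ r ^ 2) : enorm₂ v ≤ r := by
  rwa [← enorm₂_sq, pow_le_pow_iff_left₀ (enorm₂_nonneg v) hr two_ne_zero] at hv

end Enorm

theorem HasDerivAt.dotProduct_self {n : ℕ} {f : ℝ → Fin n → ℝ} {f' : Fin n → ℝ} {s : ℝ}
    (hf : HasDerivAt f f' s) : HasDerivAt (fun t => f t ⬝ᵥ f t) (2 * (f s ⬝ᵥ f')) s := by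
  have hsum : HasDerivAt (fun t => ∑ i, f t i * f t i) (∑ i, (f' i * f s i + f s i * f' i)) s :=
    HasDerivAt.fun_sum fun i _ => (hasDerivAt_pi.1 hf i).fun_mul (hasDerivAt_pi.1 hf i)
  refine hsum.congr_deriv ?_
  simp only [dotProduct, Finset.mul_sum]
  exact Finset.sum_congr rfl fun i _ => by ring

theorem gronwallBound_neg_mul_eq_self (c K x : ℝ) : gronwallBound c K (-(K * c)) x = c := by
  rcases eq_or_ne K 0 with rfl | hK
  · simp [gronwallBound_K0]
  · rw [gronwallBound_of_K_ne_0 hK]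
    field_simp
    ring

theorem le_of_hasDerivAt_le_mul_sub {f f' : ℝ → ℝ} {α c a b : ℝ} (hab : a ≤ b)
    (hf : ∀ s ∈ Set.Icc a b, HasDerivAt f (f' s) s)
    (hbound : ∀ s ∈ Set.Ico a b, f' s ≤ α * (c - f s)) (ha : f a ≤ c) : f b ≤ c := by
  have hgronwall := le_gronwallBound_of_liminf_deriv_right_le (K := -α) (ε := -(-α * c))
    (fun s hs => (hf s hs).continuousAt.continuousWithinAt)
    (fun s hs _ hr => (hf s (Set.Ico_subset_Icc_self hs)).hasDerivWithinAt.liminf_right_slope_le hr)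
    ha (fun s hs => by linarith [hbound s hs]) b ⟨hab, le_rfl⟩
  rwa [gronwallBound_neg_mul_eq_self] at hgronwall

section Observer

variable {n p : ℕ} (A : Matrix (Fin n) (Fin n) ℝ) (C : Matrix (Fin p) (Fin n) ℝ)
  (L : Matrix (Fin n) (Fin p) ℝ) (N : (Fin n → ℝ) →ₗ[ℝ] Matrix (Fin n) (Fin n) ℝ)

def observerField (y z : Fin n → ℝ) : Fin n → ℝ :=
  A *ᵥ z + N z *ᵥ z - L *ᵥ (C *ᵥ y - C *ᵥ z)

theorem observerField_add_eq (y dh v : Fin n → ℝ) :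
    observerField A C L N y (v + dh) =
      (A *ᵥ v + N v *ᵥ dh + N dh *ᵥ v + L *ᵥ (C *ᵥ v)) + N v *ᵥ v
        - (L *ᵥ (C *ᵥ (y - dh)) - A *ᵥ dh - N dh *ᵥ dh) := by
  simp only [observerField, mulVec_add, mulVec_sub, map_add, add_mulVec]
  abel

variable {A C L N}

theorem two_mul_dotProduct_observerField_le {dh : Fin n → ℝ} {α rh : ℝ}
    (hN : ∀ x : Fin n → ℝ, x ⬝ᵥ N x *ᵥ x = 0) (hα : 0 ≤ α)
    (hAdh : ∀ v : Fin n → ℝ,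
      v ⬝ᵥ (A *ᵥ v + N v *ᵥ dh + N dh *ᵥ v + L *ᵥ (C *ᵥ v)) ≤ -α * enorm₂ v ^ 2)
    {y : Fin n → ℝ} (hy : enorm₂ (L *ᵥ (C *ᵥ (y - dh)) - A *ᵥ dh - N dh *ᵥ dh) ≤ α * rh)
    (z : Fin n → ℝ) :
    2 * ((z - dh) ⬝ᵥ observerField A C L N y z) ≤ α * (rh ^ 2 - (z - dh) ⬝ᵥ (z - dh)) := by
  obtain ⟨v, rfl⟩ : ∃ v, z = v + dh := ⟨z - dh, (sub_add_cancel z dh).symm⟩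
  set g := L *ᵥ (C *ᵥ (y - dh)) - A *ᵥ dh - N dh *ᵥ dh
  have hg : -(v ⬝ᵥ g) ≤ enorm₂ v * (α * rh) := by
    rw [← neg_dotProduct, ← enorm₂_neg v]
    exact (dotProduct_le_enorm₂_mul_enorm₂ _ _).trans
      (mul_le_mul_of_nonneg_left hy (enorm₂_nonneg _))
  rw [add_sub_cancel_right, observerField_add_eq, dotProduct_sub, dotProduct_add, hN,
    ← enorm₂_sq]
  nlinarith [hAdh v, mul_nonneg hα (sq_nonneg (enorm₂ v - rh))]

end Observer

theorem stmt13_general {n p : ℕ}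
    (A : Matrix (Fin n) (Fin n) ℝ) (C : Matrix (Fin p) (Fin n) ℝ)
    (L : Matrix (Fin n) (Fin p) ℝ)
    (N : (Fin n → ℝ) →ₗ[ℝ] Matrix (Fin n) (Fin n) ℝ)
    (hN : ∀ x : Fin n → ℝ, x ⬝ᵥ (N x).mulVec x = 0)
    (d dh : Fin n → ℝ) (r α rh : ℝ) (hα : 0 < α)
    (hAdh : ∀ v : Fin n → ℝ,
      v ⬝ᵥ (A.mulVec v + (N v).mulVec dh + (N dh).mulVec v
        + L.mulVec (C.mulVec v)) ≤ -α * enorm₂ v ^ 2)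
    (hrh : ∀ v : Fin n → ℝ, enorm₂ (v - (d - dh)) ≤ r →
      enorm₂ (L.mulVec (C.mulVec v) - A.mulVec dh - (N dh).mulVec dh) ≤ α * rh)
    (x xh : ℝ → Fin n → ℝ)
    (hxball : ∀ t : ℝ, 0 ≤ t → enorm₂ (x t - d) ≤ r)
    (hxh : ∀ t : ℝ, HasDerivAt xh
      (A.mulVec (xh t) + (N (xh t)).mulVec (xh t)
        - L.mulVec (C.mulVec (x t) - C.mulVec (xh t))) t) :
    ∀ t₀ t : ℝ, 0 ≤ t₀ → t₀ ≤ t → enorm₂ (xh t₀ - dh) ≤ rh →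
      enorm₂ (xh t - dh) ≤ rh := by
  intro t₀ t ht₀ htt₀ h0
  refine enorm₂_le_of_dotProduct_self_le ((enorm₂_nonneg _).trans h0) ?_
  refine le_of_hasDerivAt_le_mul_sub (f := fun s => (xh s - dh) ⬝ᵥ (xh s - dh)) (α := α) htt₀
    (fun s _ => ((hxh s).sub_const dh).dotProduct_self) ?_ ?_
  · rintro s ⟨hs, -⟩
    have hmeas := hrh (x s - dh) (by rw [sub_sub_sub_cancel_right]; exact hxball s (ht₀.trans hs))
    exact two_mul_dotProduct_observerField_le hN hα.le hAdh hmeas (xh s)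
  · rw [← enorm₂_sq]
    exact pow_le_pow_left₀ (enorm₂_nonneg _) h0 2

/-- Observer trapping set: if the state trajectory stays in `B_r(d)` and
`A_{d̂} + LC + αI ⪯ 0`, then `B_{r̂}(d̂)` is invariant for the observer dynamics,
for any `r̂` with `α r̂ ≥ sup_{v ∈ B_r(d−d̂)} ‖LCv − Ad̂ − N(d̂)d̂‖₂`. -/
theorem stmt13 {n p : ℕ}
    (A : Matrix (Fin n) (Fin n) ℝ) (C : Matrix (Fin p) (Fin n) ℝ)
    (L : Matrix (Fin n) (Fin p) ℝ)
    (N : (Fin n → ℝ) →ₗ[ℝ] Matrix (Fin n) (Fin n) ℝ)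
    (hN : ∀ x : Fin n → ℝ, x ⬝ᵥ (N x).mulVec x = 0)
    (d dh : Fin n → ℝ) (r α rh : ℝ) (hα : 0 < α)
    (hAdh : ∀ v : Fin n → ℝ,
      v ⬝ᵥ (A.mulVec v + (N v).mulVec dh + (N dh).mulVec v
        + L.mulVec (C.mulVec v)) ≤ -α * enorm₂ v ^ 2)
    (hrh : ∀ v : Fin n → ℝ, enorm₂ (v - (d - dh)) ≤ r →
      enorm₂ (L.mulVec (C.mulVec v) - A.mulVec dh - (N dh).mulVec dh) ≤ α * rh)
    (x xh : ℝ → Fin n → ℝ)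
    (hx : ∀ t : ℝ, HasDerivAt x (A.mulVec (x t) + (N (x t)).mulVec (x t)) t)
    (hxball : ∀ t : ℝ, 0 ≤ t → enorm₂ (x t - d) ≤ r)
    (hxh : ∀ t : ℝ, HasDerivAt xh
      (A.mulVec (xh t) + (N (xh t)).mulVec (xh t)
        - L.mulVec (C.mulVec (x t) - C.mulVec (xh t))) t) :
    ∀ t₀ t : ℝ, 0 ≤ t₀ → t₀ ≤ t → enorm₂ (xh t₀ - dh) ≤ rh →
      enorm₂ (xh t - dh) ≤ rh :=
  stmt13_general A C L N hN d dh r α rh hα hAdh hrh x xh hxball hxh
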